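/- Let U be a VLA-J-SS over ℂ and let I = ⟨Jacobi⟩ be the smallest ideal of U containing all commutator defect vectors u_m(v_nw) − v_n(u_mw) − Σ_{i≥0} binom(m,i)·(u_iv)_{m+n−i}w (u,v,w ∈ U, m,n ∈ ℕ). Then the quotient U_J = U/I, with the induced operator D and induced products, is a VLA-SS; and every homomorphism φ from U to a vertex Lie algebra V vanishes on I, hence factors through U_J by a homomorphism U_J → V. -/
import Mathlib


open scoped BigOperators

noncomputable section

/-- A VLA-J-SS over `ℂ`. -/
structure VLAJSS (U : Type*) [AddCommGroup U] [Module ℂ U] where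
  D : U →ₗ[ℂ] U
  mul : ℕ → U →ₗ[ℂ] U →ₗ[ℂ] U
  trunc : ∀ u v : U, ∃ N : ℕ, ∀ n : ℕ, N ≤ n → mul n u v = 0
  dLeft : ∀ (n : ℕ) (u v : U), mul (n + 1) (D u) v = (-((n : ℂ) + 1)) • mul n u v
  dLeftZero : ∀ u v : U, mul 0 (D u) v = 0
  leibniz : ∀ (n : ℕ) (u v : U), D (mul n u v) = mul n (D u) v + mul n u (D v)

/-- A vertex Lie algebra over `ℂ`: a VLA-J-SS satisfying in addition the half skew
symmetry and the half Jacobi identity. -/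
structure VertexLie (U : Type*) [AddCommGroup U] [Module ℂ U] extends VLAJSS U where
  skew : ∀ (n : ℕ) (u v : U),
    mul n u v =
      -∑ᶠ k : ℕ, (((-1 : ℂ) ^ (n + k)) / (Nat.factorial k : ℂ)) • ((D ^ k) (mul (n + k) v u))
  jacobi : ∀ (k m n : ℕ) (u v w : U),
    ∑ᶠ i : ℕ, ((-1 : ℂ) ^ i * (Nat.choose k i : ℂ)) •
        (mul (m + k - i) u (mul (n + i) v w)
          - ((-1 : ℂ) ^ k) • mul (n + k - i) v (mul (m + i) u w))
      = ∑ᶠ i : ℕ, ((Nat.choose m i : ℂ)) • mul (m + n - i) (mul (k + i) u v) w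

variable {U : Type*} [AddCommGroup U] [Module ℂ U]

/-- A (two-sided, `D`-invariant) ideal of a VLA-J-SS. -/
def IsIdeal (A : VLAJSS U) (I : Submodule ℂ U) : Prop :=
  (∀ a ∈ I, A.D a ∈ I) ∧
  ∀ (n : ℕ) (u : U), ∀ a ∈ I, A.mul n u a ∈ I ∧ A.mul n a u ∈ I

/-- The set of commutator defect vectors of a VLA-J-SS. -/
def CommDefects (A : VLAJSS U) : Set U :=
  {x : U | ∃ (u v w : U) (m n : ℕ),
    x = A.mul m u (A.mul n v w) - A.mul n v (A.mul m u w)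
      - ∑ᶠ i : ℕ, ((Nat.choose m i : ℂ)) • A.mul (m + n - i) (A.mul i u v) w}


open Finset in
lemma binomAlt (k : ℕ) : ∀ (m j : ℕ),
    ∑ i ∈ Finset.range (k+1), (-1:ℂ)^i * (k.choose i) * ((m+k-i).choose j)
      = if k ≤ j then ((m.choose (j-k) : ℕ) : ℂ) else 0 := by
  induction k with
  | zero => intro m j; simp
  | succ k ih =>
    intro m j
    rw [Finset.sum_range_succ']
    have h1 : ∀ i ∈ Finset.range (k+1),
        (-1:ℂ)^(i+1) * ((k+1).choose (i+1)) * ((m+(k+1)-(i+1)).choose j)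
          = -((-1:ℂ)^i * (k.choose i) * ((m+k-i).choose j))
            - (-1:ℂ)^i * (k.choose (i+1)) * ((m+k-i).choose j) := by
      intro i _
      have he : m+(k+1)-(i+1) = m+k-i := by omega
      rw [he, Nat.choose_succ_succ]
      push_cast
      ring
    rw [Finset.sum_congr rfl h1, Finset.sum_sub_distrib, Finset.sum_neg_distrib]
    have hgs := Finset.sum_range_succ'
      (fun i => (-1:ℂ)^i * (k.choose i) * ((m+1+k-i).choose j)) (k+1)
    have h3 : ∀ i ∈ Finset.range (k+1),
        (-1:ℂ)^(i+1) * (k.choose (i+1)) * ((m+1+k-(i+1)).choose j)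
          = -((-1:ℂ)^i * (k.choose (i+1)) * ((m+k-i).choose j)) := by
      intro i _
      have he : m+1+k-(i+1) = m+k-i := by omega
      rw [he]; ring
    simp only [Finset.sum_congr rfl h3, Finset.sum_neg_distrib] at hgs
    have hext : ∑ i ∈ Finset.range (k+2), (-1:ℂ)^i * (k.choose i) * ((m+1+k-i).choose j)
        = ∑ i ∈ Finset.range (k+1), (-1:ℂ)^i * (k.choose i) * ((m+1+k-i).choose j) := by
      rw [Finset.sum_range_succ, Nat.choose_succ_self]
      simp
    rw [hext, ih (m+1) j] at hgs
    have hT : ∑ i ∈ Finset.range (k+1), (-1:ℂ)^i * (k.choose (i+1)) * ((m+k-i).choose j)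
        = (((m+1+k-0).choose j : ℕ) : ℂ) - (if k ≤ j then ((m+1).choose (j-k) : ℂ) else 0) := by
      simp only [pow_zero, Nat.choose_zero_right, Nat.cast_one, one_mul] at hgs
      linear_combination hgs
    rw [ih m j, hT]
    have hidx : m+(k+1)-0 = m+1+k-0 := by omega
    rw [hidx]
    by_cases hkj : k ≤ j
    · rcases eq_or_lt_of_le hkj with h | h
      · subst h
        have : ¬ (k+1 ≤ k) := by omega
        rw [if_pos le_rfl, if_pos le_rfl, if_neg this, Nat.sub_self]
        simp only [Nat.choose_zero_right, Nat.cast_one]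
        ring
      · have hk1 : k+1 ≤ j := h
        have hs : j - k = (j - (k+1)) + 1 := by omega
        rw [if_pos hkj, if_pos hkj, if_pos hk1, hs, Nat.choose_succ_succ' m (j - (k+1))]
        simp only [Nat.choose_zero_right, pow_zero, Nat.cast_one, one_mul, mul_one]
        push_cast
        ring
    · have hk1 : ¬ (k+1 ≤ j) := by omega
      rw [if_neg hkj, if_neg hkj, if_neg hk1]
      simp

lemma jacobi_of_comm {W : Type*} [AddCommGroup W] [Module ℂ W]
    (mul : ℕ → W →ₗ[ℂ] W →ₗ[ℂ] W)
    (trunc : ∀ u v : W, ∃ N : ℕ, ∀ n : ℕ, N ≤ n → mul n u v = 0)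
    (comm : ∀ (m n : ℕ) (u v w : W),
      mul m u (mul n v w) - mul n v (mul m u w)
        = ∑ᶠ i : ℕ, ((Nat.choose m i : ℂ)) • mul (m + n - i) (mul i u v) w)
    (k m n : ℕ) (u v w : W) :
    ∑ᶠ i : ℕ, ((-1 : ℂ) ^ i * (Nat.choose k i : ℂ)) •
        (mul (m + k - i) u (mul (n + i) v w)
          - ((-1 : ℂ) ^ k) • mul (n + k - i) v (mul (m + i) u w))
      = ∑ᶠ i : ℕ, ((Nat.choose m i : ℂ)) • mul (m + n - i) (mul (k + i) u v) w := by
  classical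
  obtain ⟨N1, hN1⟩ := trunc u v
  set M' : ℕ := max (m+1) N1 with hM'
  set M : ℕ := k + M' with hM
  have hMN1 : N1 ≤ M := by omega
  have hL : (∑ᶠ i : ℕ, ((-1 : ℂ) ^ i * (Nat.choose k i : ℂ)) •
        (mul (m + k - i) u (mul (n + i) v w)
          - ((-1 : ℂ) ^ k) • mul (n + k - i) v (mul (m + i) u w)))
      = ∑ i ∈ Finset.range (k+1), ((-1 : ℂ) ^ i * (Nat.choose k i : ℂ)) •
        (mul (m + k - i) u (mul (n + i) v w)
          - ((-1 : ℂ) ^ k) • mul (n + k - i) v (mul (m + i) u w)) := by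
    apply finsum_eq_sum_of_support_subset
    intro i hi
    simp only [Function.mem_support] at hi
    simp only [Finset.coe_range, Set.mem_Iio]
    by_contra hik
    push_neg at hik
    exact hi (by rw [Nat.choose_eq_zero_of_lt (by omega), Nat.cast_zero, mul_zero, zero_smul])
  have hR : (∑ᶠ i : ℕ, ((Nat.choose m i : ℂ)) • mul (m + n - i) (mul (k + i) u v) w)
      = ∑ i ∈ Finset.range M', ((Nat.choose m i : ℂ)) • mul (m + n - i) (mul (k + i) u v) w := by
    apply finsum_eq_sum_of_support_subset
    intro i hi
    simp only [Function.mem_support] at hi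
    simp only [Finset.coe_range, Set.mem_Iio]
    by_contra hik
    push_neg at hik
    exact hi (by rw [Nat.choose_eq_zero_of_lt (by omega), Nat.cast_zero, zero_smul])
  rw [hL, hR]
  have hrefl : ∑ i ∈ Finset.range (k+1), ((-1 : ℂ) ^ i * (Nat.choose k i : ℂ)) •
        (((-1 : ℂ) ^ k) • mul (n + k - i) v (mul (m + i) u w))
      = ∑ i ∈ Finset.range (k+1), ((-1 : ℂ) ^ i * (Nat.choose k i : ℂ)) •
        (mul (n + i) v (mul (m + k - i) u w)) := by
    rw [← Finset.sum_range_reflect (fun i => ((-1 : ℂ) ^ i * (Nat.choose k i : ℂ)) •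
        (mul (n + i) v (mul (m + k - i) u w))) (k+1)]
    apply Finset.sum_congr rfl
    intro i hi
    simp only [Finset.mem_range] at hi
    have hik : i ≤ k := by omega
    have h1 : k + 1 - 1 - i = k - i := by omega
    have h2 : n + (k - i) = n + k - i := by omega
    have h3 : m + k - (k - i) = m + i := by omega
    have h4 : (Nat.choose k (k - i) : ℂ) = (Nat.choose k i : ℂ) := by
      rw [Nat.choose_symm hik]
    have hsq : (-1:ℂ)^i * (-1:ℂ)^i = 1 := by
      rw [← mul_pow]; norm_num
    have h6 : (-1:ℂ)^(k-i) * (-1:ℂ)^i = (-1:ℂ)^k := by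
      rw [← pow_add]; congr 1; omega
    have h5 : (-1:ℂ)^(k-i) = (-1:ℂ)^k * (-1:ℂ)^i := by
      have := congrArg (· * (-1:ℂ)^i) h6
      simpa [mul_assoc, hsq] using this
    simp only [h1, h2, h3, h4, h5]
    rw [smul_smul]
    match_scalars
    ring
  have hcomm' : ∀ i ∈ Finset.range (k+1),
      mul (m+k-i) u (mul (n+i) v w) - mul (n+i) v (mul (m+k-i) u w)
        = ∑ j ∈ Finset.range M, (((m+k-i).choose j : ℕ) : ℂ) • mul (m+n+k-j) (mul j u v) w := by
    intro i hi
    simp only [Finset.mem_range] at hi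
    rw [comm (m+k-i) (n+i) u v w]
    rw [finsum_eq_sum_of_support_subset _ (s := Finset.range M) ?_]
    · apply Finset.sum_congr rfl
      intro j _
      have he : m + k - i + (n + i) - j = m + n + k - j := by omega
      rw [he]
    · intro j hj
      simp only [Function.mem_support] at hj
      simp only [Finset.coe_range, Set.mem_Iio]
      by_contra hjM
      push_neg at hjM
      exact hj (by rw [hN1 j (by omega), map_zero, LinearMap.zero_apply, smul_zero])
  calc
    ∑ i ∈ Finset.range (k+1), ((-1 : ℂ) ^ i * (Nat.choose k i : ℂ)) •
        (mul (m + k - i) u (mul (n + i) v w)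
          - ((-1 : ℂ) ^ k) • mul (n + k - i) v (mul (m + i) u w))
      = ∑ i ∈ Finset.range (k+1), ((-1 : ℂ) ^ i * (Nat.choose k i : ℂ)) •
          (mul (m + k - i) u (mul (n + i) v w) - mul (n + i) v (mul (m + k - i) u w)) := by
        simp only [smul_sub, Finset.sum_sub_distrib]
        rw [hrefl]
    _ = ∑ i ∈ Finset.range (k+1), ∑ j ∈ Finset.range M,
          (((-1 : ℂ) ^ i * (Nat.choose k i : ℂ)) * (((m+k-i).choose j : ℕ) : ℂ)) •
            mul (m+n+k-j) (mul j u v) w := by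
        apply Finset.sum_congr rfl
        intro i hi
        rw [hcomm' i hi, Finset.smul_sum]
        apply Finset.sum_congr rfl
        intro j _
        rw [smul_smul]
    _ = ∑ j ∈ Finset.range M,
          (∑ i ∈ Finset.range (k+1), (-1 : ℂ) ^ i * (Nat.choose k i : ℂ) * (((m+k-i).choose j : ℕ) : ℂ)) •
            mul (m+n+k-j) (mul j u v) w := by
        rw [Finset.sum_comm]
        apply Finset.sum_congr rfl
        intro j _
        rw [Finset.sum_smul]
    _ = ∑ j ∈ Finset.range M,
          (if k ≤ j then ((m.choose (j-k) : ℕ) : ℂ) else 0) • mul (m+n+k-j) (mul j u v) w := by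
        apply Finset.sum_congr rfl
        intro j _
        rw [binomAlt k m j]
    _ = ∑ i ∈ Finset.range M', ((Nat.choose m i : ℂ)) • mul (m + n - i) (mul (k + i) u v) w := by
        rw [hM, Finset.sum_range_add]
        have hz : ∑ j ∈ Finset.range k,
            (if k ≤ j then ((m.choose (j-k) : ℕ) : ℂ) else 0) • mul (m+n+k-j) (mul j u v) w = 0 := by
          apply Finset.sum_eq_zero
          intro j hj
          simp only [Finset.mem_range] at hj
          rw [if_neg (by omega), zero_smul]
        rw [hz, zero_add]
        apply Finset.sum_congr rfl
        intro i _
        have h1 : k ≤ k + i := by omega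
        have h2 : k + i - k = i := by omega
        have h3 : m + n + k - (k + i) = m + n - i := by omega
        rw [if_pos h1, h2, h3]

/-- In a vertex Lie algebra, the commutator formula holds (Jacobi at `k = 0`). -/
lemma comm_of_vertexLie {V : Type*} [AddCommGroup V] [Module ℂ V] (B : VertexLie V)
    (m n : ℕ) (u v w : V) :
    B.mul m u (B.mul n v w) - B.mul n v (B.mul m u w)
      = ∑ᶠ i : ℕ, ((Nat.choose m i : ℂ)) • B.mul (m + n - i) (B.mul i u v) w := by
  have h := B.jacobi 0 m n u v w
  rw [finsum_eq_single _ 0 (fun i hi => by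
    rw [Nat.choose_eq_zero_of_lt (Nat.pos_of_ne_zero hi), Nat.cast_zero, mul_zero,
      zero_smul])] at h
  simpa using h

/-- if `I = ⟨Jacobi⟩` is the smallest ideal of a VLA-J-SS `U` containing
all commutator defect vectors, then the quotient `U_J = U/I`, with the induced `D` and
products, is a VLA-SS; and every homomorphism from `U` to a vertex Lie algebra vanishes
on `I`, hence factors through `U_J`. -/
theorem stmt11 (A : VLAJSS U) (I : Submodule ℂ U)
    (hI : IsIdeal A I) (hc : CommDefects A ⊆ I)
    (hmin : ∀ J : Submodule ℂ U, IsIdeal A J → CommDefects A ⊆ J → I ≤ J) :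
    ∃ (DQ : (U ⧸ I) →ₗ[ℂ] (U ⧸ I)) (mulQ : ℕ → (U ⧸ I) →ₗ[ℂ] (U ⧸ I) →ₗ[ℂ] (U ⧸ I)),
      (∀ u : U, DQ (I.mkQ u) = I.mkQ (A.D u)) ∧
      (∀ (n : ℕ) (u v : U), mulQ n (I.mkQ u) (I.mkQ v) = I.mkQ (A.mul n u v)) ∧
      -- the quotient is a VLA-SS:
      (∀ x y : U ⧸ I, ∃ N : ℕ, ∀ n : ℕ, N ≤ n → mulQ n x y = 0) ∧
      (∀ (n : ℕ) (x y : U ⧸ I), mulQ (n + 1) (DQ x) y = (-((n : ℂ) + 1)) • mulQ n x y) ∧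
      (∀ x y : U ⧸ I, mulQ 0 (DQ x) y = 0) ∧
      (∀ (n : ℕ) (x y : U ⧸ I), DQ (mulQ n x y) = mulQ n (DQ x) y + mulQ n x (DQ y)) ∧
      (∀ (k m n : ℕ) (x y z : U ⧸ I),
        ∑ᶠ i : ℕ, ((-1 : ℂ) ^ i * (Nat.choose k i : ℂ)) •
            (mulQ (m + k - i) x (mulQ (n + i) y z)
              - ((-1 : ℂ) ^ k) • mulQ (n + k - i) y (mulQ (m + i) x z))
          = ∑ᶠ i : ℕ, ((Nat.choose m i : ℂ)) • mulQ (m + n - i) (mulQ (k + i) x y) z) ∧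
      -- universal property:
      (∀ (V : Type*) (_ : AddCommGroup V), ∀ (_ : Module ℂ V) (B : VertexLie V)
          (φ : U →ₗ[ℂ] V),
        (∀ (n : ℕ) (u v : U), φ (A.mul n u v) = B.mul n (φ u) (φ v)) →
        (∀ u : U, φ (A.D u) = B.D (φ u)) →
        (∀ a ∈ I, φ a = 0) ∧
        ∃ ψ : (U ⧸ I) →ₗ[ℂ] V,
          (∀ u : U, ψ (I.mkQ u) = φ u) ∧
          (∀ (n : ℕ) (x y : U ⧸ I), ψ (mulQ n x y) = B.mul n (ψ x) (ψ y)) ∧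
          (∀ x : U ⧸ I, ψ (DQ x) = B.D (ψ x))) := by
  classical
  have hDmap : I ≤ I.comap A.D := fun a ha => hI.1 a ha
  have hFmap : ∀ (n : ℕ) (u : U), I ≤ I.comap (A.mul n u) := fun n u a ha => (hI.2 n u a ha).1
  set F : ℕ → U →ₗ[ℂ] ((U ⧸ I) →ₗ[ℂ] (U ⧸ I)) := fun n =>
    { toFun := fun u => Submodule.mapQ I I (A.mul n u) (hFmap n u)
      map_add' := by
        intro u u'
        apply LinearMap.ext
        intro x
        obtain ⟨v, rfl⟩ := Submodule.Quotient.mk_surjective I x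
        simp only [Submodule.mapQ_apply, LinearMap.add_apply, map_add,
          Submodule.Quotient.mk_add]
      map_smul' := by
        intro c u
        apply LinearMap.ext
        intro x
        obtain ⟨v, rfl⟩ := Submodule.Quotient.mk_surjective I x
        simp only [Submodule.mapQ_apply, RingHom.id_apply, LinearMap.smul_apply, map_smul,
          Submodule.Quotient.mk_smul] } with hFdef
  have hFker : ∀ n : ℕ, I ≤ LinearMap.ker (F n) := by
    intro n a ha
    rw [LinearMap.mem_ker]
    apply LinearMap.ext
    intro x
    obtain ⟨v, rfl⟩ := Submodule.Quotient.mk_surjective I x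
    show Submodule.mapQ I I (A.mul n a) (hFmap n a) (Submodule.Quotient.mk v) = 0
    rw [Submodule.mapQ_apply, Submodule.Quotient.mk_eq_zero]
    exact (hI.2 n v a ha).2
  refine ⟨Submodule.mapQ I I A.D hDmap,
    fun n => Submodule.liftQ I (F n) (hFker n), ?_⟩
  set DQ : (U ⧸ I) →ₗ[ℂ] (U ⧸ I) := Submodule.mapQ I I A.D hDmap with hDQdef
  set mulQ : ℕ → (U ⧸ I) →ₗ[ℂ] (U ⧸ I) →ₗ[ℂ] (U ⧸ I) :=
    fun n => Submodule.liftQ I (F n) (hFker n) with hmulQdef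
  have hD' : ∀ u : U, DQ (Submodule.Quotient.mk u) = Submodule.Quotient.mk (A.D u) := by
    intro u
    rw [hDQdef, Submodule.mapQ_apply]
  have hmul' : ∀ (n : ℕ) (u v : U),
      mulQ n (Submodule.Quotient.mk u) (Submodule.Quotient.mk v)
        = Submodule.Quotient.mk (A.mul n u v) := by
    intro n u v
    rw [hmulQdef]
    show Submodule.liftQ I (F n) (hFker n) (Submodule.Quotient.mk u)
      (Submodule.Quotient.mk v) = _
    rw [Submodule.liftQ_apply]
    show Submodule.mapQ I I (A.mul n u) (hFmap n u) (Submodule.Quotient.mk v) = _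
    rw [Submodule.mapQ_apply]
  have hD : ∀ u : U, DQ (I.mkQ u) = I.mkQ (A.D u) := fun u => hD' u
  have hmul : ∀ (n : ℕ) (u v : U), mulQ n (I.mkQ u) (I.mkQ v) = I.mkQ (A.mul n u v) :=
    fun n u v => hmul' n u v
  have truncQ : ∀ x y : U ⧸ I, ∃ N : ℕ, ∀ n : ℕ, N ≤ n → mulQ n x y = 0 := by
    intro x y
    obtain ⟨u, rfl⟩ := Submodule.Quotient.mk_surjective I x
    obtain ⟨v, rfl⟩ := Submodule.Quotient.mk_surjective I y
    obtain ⟨N, hN⟩ := A.trunc u v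
    exact ⟨N, fun n hn => by
      rw [hmul' n u v, hN n hn, Submodule.Quotient.mk_zero]⟩
  have commQ : ∀ (m n : ℕ) (x y z : U ⧸ I),
      mulQ m x (mulQ n y z) - mulQ n y (mulQ m x z)
        = ∑ᶠ i : ℕ, ((Nat.choose m i : ℂ)) • mulQ (m + n - i) (mulQ i x y) z := by
    intro m n x y z
    obtain ⟨u, rfl⟩ := Submodule.Quotient.mk_surjective I x
    obtain ⟨v, rfl⟩ := Submodule.Quotient.mk_surjective I y
    obtain ⟨w, rfl⟩ := Submodule.Quotient.mk_surjective I z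
    obtain ⟨N, hN⟩ := A.trunc u v
    have hq : (∑ᶠ i : ℕ, ((Nat.choose m i : ℂ)) •
          mulQ (m + n - i) (mulQ i (Submodule.Quotient.mk u) (Submodule.Quotient.mk v))
            (Submodule.Quotient.mk w))
        = ∑ i ∈ Finset.range N, ((Nat.choose m i : ℂ)) •
            (Submodule.Quotient.mk (A.mul (m+n-i) (A.mul i u v) w) : U ⧸ I) := by
      rw [finsum_eq_sum_of_support_subset _ (s := Finset.range N) ?_]
      · exact Finset.sum_congr rfl fun i _ => by rw [hmul', hmul']
      · intro i hi
        simp only [Function.mem_support] at hi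
        simp only [Finset.coe_range, Set.mem_Iio]
        by_contra hiN
        push_neg at hiN
        exact hi (by rw [hmul', hN i hiN, Submodule.Quotient.mk_zero, map_zero,
          LinearMap.zero_apply, smul_zero])
    have hu : (∑ᶠ i : ℕ, ((Nat.choose m i : ℂ)) • A.mul (m + n - i) (A.mul i u v) w)
        = ∑ i ∈ Finset.range N, ((Nat.choose m i : ℂ)) • A.mul (m+n-i) (A.mul i u v) w := by
      rw [finsum_eq_sum_of_support_subset _ (s := Finset.range N) ?_]
      intro i hi
      simp only [Function.mem_support] at hi
      simp only [Finset.coe_range, Set.mem_Iio]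
      by_contra hiN
      push_neg at hiN
      exact hi (by rw [hN i hiN, map_zero, LinearMap.zero_apply, smul_zero])
    have hmksum : (Submodule.Quotient.mk
          (∑ i ∈ Finset.range N, ((Nat.choose m i : ℂ)) • A.mul (m+n-i) (A.mul i u v) w)
            : U ⧸ I)
        = ∑ i ∈ Finset.range N, ((Nat.choose m i : ℂ)) •
            (Submodule.Quotient.mk (A.mul (m+n-i) (A.mul i u v) w) : U ⧸ I) := by
      rw [← Submodule.mkQ_apply, map_sum]
      exact Finset.sum_congr rfl fun i _ => by rw [map_smul, Submodule.mkQ_apply]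
    rw [hmul', hmul', hmul', hmul', hq, ← hmksum, ← hu, ← Submodule.Quotient.mk_sub]
    rw [Submodule.Quotient.eq]
    exact hc ⟨u, v, w, m, n, rfl⟩
  refine ⟨hD, hmul, truncQ, ?_, ?_, ?_, ?_, ?_⟩
  · intro n x y
    obtain ⟨u, rfl⟩ := Submodule.Quotient.mk_surjective I x
    obtain ⟨v, rfl⟩ := Submodule.Quotient.mk_surjective I y
    rw [hD', hmul', hmul', A.dLeft, Submodule.Quotient.mk_smul]
  · intro x y
    obtain ⟨u, rfl⟩ := Submodule.Quotient.mk_surjective I x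
    obtain ⟨v, rfl⟩ := Submodule.Quotient.mk_surjective I y
    rw [hD', hmul', A.dLeftZero, Submodule.Quotient.mk_zero]
  · intro n x y
    obtain ⟨u, rfl⟩ := Submodule.Quotient.mk_surjective I x
    obtain ⟨v, rfl⟩ := Submodule.Quotient.mk_surjective I y
    rw [hmul', hD', hD', hD', hmul', hmul', A.leibniz, Submodule.Quotient.mk_add]
  · intro k m n x y z
    exact jacobi_of_comm mulQ truncQ commQ k m n x y z
  · intro V hAG hMod B φ hφm hφd
    have hkerIdeal : IsIdeal A (LinearMap.ker φ) := by
      constructor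
      · intro a ha
        rw [LinearMap.mem_ker] at ha ⊢
        rw [hφd, ha, map_zero]
      · intro n u a ha
        rw [LinearMap.mem_ker] at ha
        constructor
        · rw [LinearMap.mem_ker, hφm, ha, map_zero]
        · rw [LinearMap.mem_ker, hφm, ha, map_zero, LinearMap.zero_apply]
    have hCk : CommDefects A ⊆ (LinearMap.ker φ : Submodule ℂ U) := by
      rintro x ⟨u, v, w, m, n, rfl⟩
      rw [SetLike.mem_coe, LinearMap.mem_ker]
      obtain ⟨Na, hNa⟩ := A.trunc u v
      obtain ⟨Nb, hNb⟩ := B.trunc (φ u) (φ v)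
      set N : ℕ := max Na Nb with hNdef
      have hu : (∑ᶠ i : ℕ, ((Nat.choose m i : ℂ)) • A.mul (m + n - i) (A.mul i u v) w)
          = ∑ i ∈ Finset.range N, ((Nat.choose m i : ℂ)) • A.mul (m+n-i) (A.mul i u v) w := by
        rw [finsum_eq_sum_of_support_subset _ (s := Finset.range N) ?_]
        intro i hi
        simp only [Function.mem_support] at hi
        simp only [Finset.coe_range, Set.mem_Iio]
        by_contra hiN
        push_neg at hiN
        exact hi (by rw [hNa i (by omega), map_zero, LinearMap.zero_apply, smul_zero])
      have hb : (∑ᶠ i : ℕ, ((Nat.choose m i : ℂ)) •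
            B.mul (m + n - i) (B.mul i (φ u) (φ v)) (φ w))
          = ∑ i ∈ Finset.range N, ((Nat.choose m i : ℂ)) •
              B.mul (m+n-i) (B.mul i (φ u) (φ v)) (φ w) := by
        rw [finsum_eq_sum_of_support_subset _ (s := Finset.range N) ?_]
        intro i hi
        simp only [Function.mem_support] at hi
        simp only [Finset.coe_range, Set.mem_Iio]
        by_contra hiN
        push_neg at hiN
        exact hi (by rw [hNb i (by omega), map_zero, LinearMap.zero_apply, smul_zero])
      rw [map_sub, map_sub, hφm, hφm, hφm, hφm, hu, map_sum]
      have hterm : ∑ i ∈ Finset.range N,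
            φ (((Nat.choose m i : ℂ)) • A.mul (m+n-i) (A.mul i u v) w)
          = ∑ i ∈ Finset.range N, ((Nat.choose m i : ℂ)) •
              B.mul (m+n-i) (B.mul i (φ u) (φ v)) (φ w) := by
        exact Finset.sum_congr rfl fun i _ => by rw [map_smul, hφm, hφm]
      rw [hterm, ← hb, comm_of_vertexLie B m n (φ u) (φ v) (φ w), sub_self]
    have hvanish : ∀ a ∈ I, φ a = 0 := fun a ha =>
      LinearMap.mem_ker.1 (hmin (LinearMap.ker φ) hkerIdeal hCk ha)
    refine ⟨hvanish, Submodule.liftQ I φ (fun a ha => LinearMap.mem_ker.2 (hvanish a ha)),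
      ?_, ?_, ?_⟩
    · intro u
      rw [Submodule.mkQ_apply, Submodule.liftQ_apply]
    · intro n x y
      obtain ⟨u, rfl⟩ := Submodule.Quotient.mk_surjective I x
      obtain ⟨v, rfl⟩ := Submodule.Quotient.mk_surjective I y
      rw [hmul', Submodule.liftQ_apply, Submodule.liftQ_apply, Submodule.liftQ_apply, hφm]
    · intro x
      obtain ⟨u, rfl⟩ := Submodule.Quotient.mk_surjective I x
      rw [hD', Submodule.liftQ_apply, Submodule.liftQ_apply, hφd]

end
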